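/- arXiv:1305.0713 — 6 statements merged into one kernel-verified Lean document; each statement's English description precedes it below -/
import Mathlib

section
/- Let α < 1 and let z : [0,∞) → ℝ be a continuous function with z(0) = 0. Then the equation y(t) = y₀ + z(t) + α · max_{0≤s≤t} y(s) has the unique continuous solution y(t) = y₀/(1−α) + z(t) + (α/(1−α)) · max_{0≤s≤t} z(s). -/
open Set

/-!
Write `M g t` for the running maximum `runningMax g t` of `g` over `[0, t]`. A continuous `g`
attains `M g t` at some `s ≤ t`, and there also `M g s = M g t`. Evaluating the equation at such a
point of `y` and at one of `z` gives `(1 - α) M y t = y₀ + M z t`, which pins down `M y`, hence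
`y`. Conversely, since `z ≤ M z`, for `β ≥ -1` the running maximum of `a + z + β M z` is
`a + (1 + β) M z`, attained where `z` attains `M z t`; this makes the explicit formula a solution.
-/

noncomputable def runningMax (g : ℝ → ℝ) (t : ℝ) : ℝ := sSup (g '' Icc 0 t)

section RunningMax

variable {g : ℝ → ℝ} {s t : ℝ}

lemma le_runningMax (hg : Continuous g) (hs : s ∈ Icc 0 t) : g s ≤ runningMax g t :=
  le_csSup (isCompact_Icc.image hg).bddAbove (mem_image_of_mem g hs)

lemma self_le_runningMax (hg : Continuous g) (hs : 0 ≤ s) : g s ≤ runningMax g s :=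
  le_runningMax hg ⟨hs, le_rfl⟩

lemma runningMax_mono (hg : Continuous g) (hs : 0 ≤ s) (hst : s ≤ t) :
    runningMax g s ≤ runningMax g t :=
  csSup_le_csSup (isCompact_Icc.image hg).bddAbove ((nonempty_Icc.mpr hs).image g)
    (image_mono (Icc_subset_Icc le_rfl hst))

lemma exists_eq_runningMax (hg : Continuous g) (ht : 0 ≤ t) :
    ∃ s ∈ Icc 0 t, g s = runningMax g t ∧ runningMax g s = runningMax g t := by
  obtain ⟨s, hs, hgs⟩ := (isCompact_Icc.image hg).sSup_mem ((nonempty_Icc.mpr ht).image g)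
  refine ⟨s, hs, hgs, le_antisymm (runningMax_mono hg hs.1 hs.2) ?_⟩
  calc runningMax g t = g s := hgs.symm
    _ ≤ runningMax g s := self_le_runningMax hg hs.1

lemma runningMax_add_mul_runningMax (a β : ℝ) (hβ : 0 ≤ 1 + β) (hg : Continuous g)
    (ht : 0 ≤ t) :
    runningMax (fun s => a + g s + β * runningMax g s) t = a + (1 + β) * runningMax g t := by
  obtain ⟨s₁, hs₁, hgs₁, hMs₁⟩ := exists_eq_runningMax hg ht
  refine IsGreatest.csSup_eq ⟨⟨s₁, hs₁, by simp only [hgs₁, hMs₁]; ring⟩, ?_⟩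
  rintro _ ⟨s, hs, rfl⟩
  have hgs : g s ≤ runningMax g s := self_le_runningMax hg hs.1
  have hMs := mul_le_mul_of_nonneg_left (runningMax_mono hg hs.1 hs.2) hβ
  calc a + g s + β * runningMax g s
      = a + (g s - runningMax g s) + (1 + β) * runningMax g s := by ring
    _ ≤ a + (1 + β) * runningMax g t := by linarith

end RunningMax

lemma runningMax_of_eq_add_mul_runningMax {y z : ℝ → ℝ} {c α t : ℝ} (hα : α ≤ 1)
    (hy : Continuous y) (hz : Continuous z) (ht : 0 ≤ t)
    (hyz : ∀ s ∈ Icc 0 t, y s = c + z s + α * runningMax y s) :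
    (1 - α) * runningMax y t = c + runningMax z t := by
  apply le_antisymm
  · obtain ⟨s₀, hs₀, hys₀, hMs₀⟩ := exists_eq_runningMax hy ht
    have hzs₀ := le_runningMax hz hs₀
    have hsol := hyz s₀ hs₀
    rw [hys₀, hMs₀] at hsol
    linarith
  · obtain ⟨s₁, hs₁, hzs₁, -⟩ := exists_eq_runningMax hz ht
    have hsol := hyz s₁ hs₁
    have hys₁ := self_le_runningMax hy hs₁.1
    have hMs₁ := mul_le_mul_of_nonneg_left (runningMax_mono hy hs₁.1 hs₁.2) (sub_nonneg.mpr hα)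
    linarith

theorem perturbed_equation_explicit_solution_general (α y₀ : ℝ) (hα : α < 1)
    (z : ℝ → ℝ) (hz : Continuous z) :
    (∀ t : ℝ, 0 ≤ t →
      (fun t => y₀ / (1 - α) + z t + α / (1 - α) * sSup (z '' Icc 0 t)) t
        = y₀ + z t
          + α * sSup ((fun t => y₀ / (1 - α) + z t + α / (1 - α) * sSup (z '' Icc 0 t))
              '' Icc 0 t)) ∧
    (∀ y : ℝ → ℝ, Continuous y →
      (∀ t : ℝ, 0 ≤ t → y t = y₀ + z t + α * sSup (y '' Icc 0 t)) →
      ∀ t : ℝ, 0 ≤ t →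
        y t = y₀ / (1 - α) + z t + α / (1 - α) * sSup (z '' Icc 0 t)) := by
  have hα' : 1 - α ≠ 0 := by linarith
  refine ⟨fun t ht => ?_, fun y hy hsol t ht => ?_⟩
  · have hβ : 0 ≤ 1 + α / (1 - α) := by
      rw [show 1 + α / (1 - α) = 1 / (1 - α) by field_simp; ring]
      exact one_div_nonneg.mpr (by linarith)
    have hmax := runningMax_add_mul_runningMax (y₀ / (1 - α)) _ hβ hz ht
    unfold runningMax at hmax
    rw [hmax]
    field_simp
    ring
  · have hmax := runningMax_of_eq_add_mul_runningMax hα.le hy hz ht fun s hs => hsol s hs.1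
    unfold runningMax at hmax
    rw [hsol t ht]
    field_simp
    linear_combination α * hmax

/-- Let α < 1 and z : [0,∞) → ℝ continuous with z 0 = 0. The equation
y(t) = y₀ + z(t) + α · max_{0≤s≤t} y(s) has the unique continuous solution
y(t) = y₀/(1−α) + z(t) + (α/(1−α)) · max_{0≤s≤t} z(s). -/
theorem perturbed_equation_explicit_solution (α y₀ : ℝ) (hα : α < 1)
    (z : ℝ → ℝ) (hz : Continuous z) (hz0 : z 0 = 0) :
    (∀ t : ℝ, 0 ≤ t →
      (fun t => y₀ / (1 - α) + z t + α / (1 - α) * sSup (z '' Icc 0 t)) t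
        = y₀ + z t
          + α * sSup ((fun t => y₀ / (1 - α) + z t + α / (1 - α) * sSup (z '' Icc 0 t))
              '' Icc 0 t)) ∧
    (∀ y : ℝ → ℝ, Continuous y →
      (∀ t : ℝ, 0 ≤ t → y t = y₀ + z t + α * sSup (y '' Icc 0 t)) →
      ∀ t : ℝ, 0 ≤ t →
        y t = y₀ / (1 - α) + z t + α / (1 - α) * sSup (z '' Icc 0 t)) :=
  perturbed_equation_explicit_solution_general α y₀ hα z hz
end

section
/- Let α < 1, y₀ ∈ ℝ, and z : [0,∞) → ℝ continuous with z(0)=0. If y(t) = y₀ + z(t) + α·max_{0≤s≤t} y(s) for all t, then max_{0≤s≤t} y(s) = (1/(1−α))·(y₀ + max_{0≤s≤t} z(s)). -/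
open Set

/-! At a time `s ≤ t` where `y` attains its maximum over `[0, t]`, the running maximum has already
reached its final value `M`, so the equation at `s` reads `(1 - α) M = y₀ + z s ≤ y₀ + max z`.
Conversely `y ≤` its running maximum turns the equation into `y₀ + z s ≤ (1 - α) M(s) ≤ (1 - α) M`
for every `s ≤ t`, where the last step uses `α < 1` and the monotonicity of the running maximum. -/

section RunningMax

variable {f : ℝ → ℝ} {a t : ℝ}

theorem le_sSup_image_Icc (hf : ContinuousOn f (Icc a t)) {s : ℝ} (hs : s ∈ Icc a t) :
    f s ≤ sSup (f '' Icc a t) :=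
  le_csSup (isCompact_Icc.bddAbove_image hf) (mem_image_of_mem f hs)

theorem sSup_image_Icc_mono (hf : ContinuousOn f (Icc a t)) {s : ℝ} (has : a ≤ s)
    (hst : s ≤ t) : sSup (f '' Icc a s) ≤ sSup (f '' Icc a t) :=
  csSup_le_csSup (isCompact_Icc.bddAbove_image hf) ⟨f a, mem_image_of_mem f ⟨le_rfl, has⟩⟩
    (image_mono (Icc_subset_Icc_right hst))

theorem exists_apply_eq_sSup_image_Icc_eq (hf : ContinuousOn f (Icc a t)) (hat : a ≤ t) :
    ∃ s ∈ Icc a t, f s = sSup (f '' Icc a s) ∧ sSup (f '' Icc a s) = sSup (f '' Icc a t) := by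
  obtain ⟨s, hs, hfs⟩ := isCompact_Icc.exists_sSup_image_eq ⟨a, le_rfl, hat⟩ hf
  have hmax : sSup (f '' Icc a s) = sSup (f '' Icc a t) :=
    le_antisymm (sSup_image_Icc_mono hf hs.1 hs.2)
      (hfs.trans_le (le_sSup_image_Icc (hf.mono (Icc_subset_Icc_right hs.2)) ⟨hs.1, le_rfl⟩))
  exact ⟨s, hs, hfs.symm.trans hmax.symm, hmax⟩

end RunningMax

theorem perturbed_equation_running_max_general (α y₀ : ℝ) (hα : α < 1)
    (z : ℝ → ℝ) (hz : Continuous z)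
    (y : ℝ → ℝ) (hy : Continuous y)
    (heq : ∀ t : ℝ, 0 ≤ t → y t = y₀ + z t + α * sSup (y '' Icc 0 t)) :
    ∀ t : ℝ, 0 ≤ t →
      sSup (y '' Icc 0 t) = (1 / (1 - α)) * (y₀ + sSup (z '' Icc 0 t)) := by
  intro t ht
  have hα' : 0 < 1 - α := sub_pos.2 hα
  have upper : (1 - α) * sSup (y '' Icc 0 t) ≤ y₀ + sSup (z '' Icc 0 t) := by
    obtain ⟨s, hs, hys, hmax⟩ := exists_apply_eq_sSup_image_Icc_eq hy.continuousOn ht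
    have hzs := le_sSup_image_Icc hz.continuousOn hs
    rw [← hmax]
    linarith [heq s hs.1]
  have lower : y₀ + sSup (z '' Icc 0 t) ≤ (1 - α) * sSup (y '' Icc 0 t) := by
    rw [← le_sub_iff_add_le']
    refine csSup_le ⟨z 0, mem_image_of_mem z ⟨le_rfl, ht⟩⟩ ?_
    rintro _ ⟨s, hs, rfl⟩
    have hys := le_sSup_image_Icc hy.continuousOn ⟨hs.1, le_rfl⟩
    have hmono := mul_le_mul_of_nonneg_left (sSup_image_Icc_mono hy.continuousOn hs.1 hs.2) hα'.le
    linarith [heq s hs.1]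
  rw [one_div_mul_eq_div, eq_div_iff hα'.ne']
  linarith

/-- Let α < 1, y₀ ∈ ℝ, z continuous with z 0 = 0. If y is continuous and
y(t) = y₀ + z(t) + α·max_{0≤s≤t} y(s) for all t ≥ 0, then
max_{0≤s≤t} y(s) = (1/(1−α))·(y₀ + max_{0≤s≤t} z(s)). -/
theorem perturbed_equation_running_max (α y₀ : ℝ) (hα : α < 1)
    (z : ℝ → ℝ) (hz : Continuous z) (hz0 : z 0 = 0)
    (y : ℝ → ℝ) (hy : Continuous y)
    (heq : ∀ t : ℝ, 0 ≤ t → y t = y₀ + z t + α * sSup (y '' Icc 0 t)) :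
    ∀ t : ℝ, 0 ≤ t →
      sSup (y '' Icc 0 t) = (1 / (1 - α)) * (y₀ + sSup (z '' Icc 0 t)) :=
  perturbed_equation_running_max_general α y₀ hα z hz y hy heq
end

section
/- (Skorokhod reflection, deterministic version) Let w : [0,∞) → ℝ be continuous with w(0) = 0. Define L(t) = max_{0≤s≤t} ((−w(s)) ⊔ 0) and X(t) = w(t) + L(t). Then: (i) X(t) ≥ 0 for all t; (ii) L is nondecreasing with L(0)=0; (iii) L increases only when X = 0, i.e. if X(t) > 0 then L is locally constant at t. -/
/-!
Since `w 0 = 0`, the supremum of `(-w) ⊔ 0` over `[0, t]` is just the running supremum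
`L t = sup_{[0,t]} (-w)`, which dominates `-w t`; hence `X = w + L ≥ 0`. If `X t > 0`, then `-w < L t`
on a neighbourhood of `t` by continuity. To the right of `t` this keeps the supremum from growing,
and to the left it forces the supremum over `[0, t]` to be attained before any nearby `u < t`.
-/

open Set

noncomputable def runningSup (g : ℝ → ℝ) (t : ℝ) : ℝ := sSup (g '' Icc 0 t)

section RunningSup

variable {g : ℝ → ℝ}

theorem runningSup_zero (g : ℝ → ℝ) : runningSup g 0 = g 0 := by
  rw [runningSup, Icc_self, image_singleton, csSup_singleton]

theorem le_runningSup (hg : Continuous g) {s t : ℝ} (hs : s ∈ Icc 0 t) : g s ≤ runningSup g t :=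
  le_csSup (isCompact_Icc.image hg).bddAbove (mem_image_of_mem g hs)

theorem runningSup_le {t c : ℝ} (ht : 0 ≤ t) (h : ∀ s ∈ Icc 0 t, g s ≤ c) : runningSup g t ≤ c :=
  csSup_le ((nonempty_Icc.mpr ht).image g) (forall_mem_image.mpr h)

theorem exists_eq_runningSup (hg : Continuous g) {t : ℝ} (ht : 0 ≤ t) :
    ∃ s ∈ Icc 0 t, g s = runningSup g t :=
  (isCompact_Icc.image hg).sSup_mem ((nonempty_Icc.mpr ht).image g)

theorem monotoneOn_runningSup (hg : Continuous g) : MonotoneOn (runningSup g) (Ici 0) :=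
  fun _ ha _ _ hab => runningSup_le ha fun _ hs => le_runningSup hg ⟨hs.1, hs.2.trans hab⟩

theorem runningSup_max_const (hg : Continuous g) {c t : ℝ} (hc : c ≤ g 0) (ht : 0 ≤ t) :
    runningSup (fun s => max (g s) c) t = runningSup g t := by
  have hgc : Continuous fun s => max (g s) c := hg.max continuous_const
  refine le_antisymm (runningSup_le ht fun s hs => max_le (le_runningSup hg hs) ?_)
    (runningSup_le ht fun s hs => (le_max_left _ c).trans (le_runningSup hgc hs))
  exact hc.trans (le_runningSup hg ⟨le_rfl, ht⟩)

theorem runningSup_eq_of_lt (hg : Continuous g) {t : ℝ} (ht : 0 ≤ t) (hlt : g t < runningSup g t) :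
    ∃ ε > 0, ∀ u : ℝ, 0 ≤ u → |u - t| < ε → runningSup g u = runningSup g t := by
  obtain ⟨ε, hε, hnear⟩ := Metric.eventually_nhds_iff.mp
    (hg.continuousAt.eventually_lt continuousAt_const hlt)
  refine ⟨ε, hε, fun u hu hut => ?_⟩
  have hnear' : ∀ s, |s - t| ≤ |u - t| → g s < runningSup g t := fun s hs =>
    hnear (by rw [Real.dist_eq]; exact hs.trans_lt hut)
  rcases le_total u t with hut' | htu'
  · refine le_antisymm (monotoneOn_runningSup hg hu ht hut') ?_
    obtain ⟨s, hs, hgs⟩ := exists_eq_runningSup hg ht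
    have hsu : s ≤ u := by
      by_contra! hus
      refine (hnear' s ?_).ne hgs
      rw [abs_of_nonpos (by linarith [hs.2]), abs_of_nonpos (by linarith)]
      linarith
    exact hgs ▸ le_runningSup hg ⟨hs.1, hsu⟩
  · refine le_antisymm (runningSup_le hu fun s hs => ?_) (monotoneOn_runningSup hg ht hu htu')
    rcases le_total s t with hst | hts
    · exact le_runningSup hg ⟨hs.1, hst⟩
    · refine (hnear' s ?_).le
      rw [abs_of_nonneg (by linarith), abs_of_nonneg (by linarith)]
      linarith [hs.2]

end RunningSup

/-- (Skorokhod reflection, deterministic version) Let w be continuous with w 0 = 0,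
L(t) = max_{0≤s≤t} ((−w(s)) ⊔ 0) and X(t) = w(t) + L(t). Then X ≥ 0 on [0,∞),
L is nondecreasing on [0,∞) with L 0 = 0, and L increases only when X = 0: if
X(t) > 0 then L is locally constant at t. -/
theorem skorokhod_reflection_explicit (w : ℝ → ℝ) (hw : Continuous w) (hw0 : w 0 = 0) :
    let L : ℝ → ℝ := fun t => sSup ((fun s => max (-w s) 0) '' Icc 0 t)
    let X : ℝ → ℝ := fun t => w t + L t
    (∀ t : ℝ, 0 ≤ t → 0 ≤ X t) ∧
    (MonotoneOn L (Ici 0) ∧ L 0 = 0) ∧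
    (∀ t : ℝ, 0 ≤ t → 0 < X t →
      ∃ ε > 0, ∀ u : ℝ, 0 ≤ u → |u - t| < ε → L u = L t) := by
  intro L X
  have hL : ∀ t, 0 ≤ t → L t = runningSup (fun s => -w s) t := fun t ht =>
    runningSup_max_const hw.neg (by simp [hw0]) ht
  refine ⟨fun t ht => ?_, ⟨monotoneOn_runningSup (hw.neg.max continuous_const), ?_⟩,
    fun t ht hX => ?_⟩
  · have : -w t ≤ L t := hL t ht ▸ le_runningSup hw.neg ⟨ht, le_rfl⟩
    simp only [X]
    linarith
  · exact (runningSup_zero _).trans (by simp [hw0])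
  · have hlt : -w t < runningSup (fun s => -w s) t := by simp only [X] at hX; linarith [hL t ht]
    obtain ⟨ε, hε, hconst⟩ := runningSup_eq_of_lt hw.neg ht hlt
    exact ⟨ε, hε, fun u hu hut => (hL u hu).trans ((hconst u hu hut).trans (hL t ht).symm)⟩
end

section
/- (Uniqueness of Skorokhod reflection) Let w : [0,∞) → ℝ be continuous with w(0)=0. Suppose (X, L) satisfies: X(t) = w(t) + L(t), X(t) ≥ 0, L continuous nondecreasing with L(0)=0, and L increases only on the set {t : X(t) = 0}. Then L(t) = max_{0≤s≤t}((−w(s)) ⊔ 0) and hence X is uniquely determined. -/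
open Set

/-- (Uniqueness of Skorokhod reflection) Let w be continuous with w 0 = 0. If
X(t) = w(t) + L(t), X ≥ 0, L continuous nondecreasing with L 0 = 0 and L increases
only on {X = 0}, then L(t) = max_{0≤s≤t}((−w(s)) ⊔ 0), so X is uniquely determined. -/
theorem skorokhod_reflection_unique (w X L : ℝ → ℝ)
    (hw : Continuous w) (hw0 : w 0 = 0)
    (hXL : ∀ t : ℝ, 0 ≤ t → X t = w t + L t)
    (hXpos : ∀ t : ℝ, 0 ≤ t → 0 ≤ X t)
    (hLcont : Continuous L) (hLmono : MonotoneOn L (Ici 0)) (hL0 : L 0 = 0)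
    (hflat : ∀ s t : ℝ, 0 ≤ s → s < t → (∀ u ∈ Icc s t, 0 < X u) → L s = L t) :
    ∀ t : ℝ, 0 ≤ t → L t = sSup ((fun s => max (-w s) 0) '' Icc 0 t) := by
  intro t ht
  set S : Set ℝ := (fun s => max (-w s) 0) '' Icc 0 t with hS
  have hne : S.Nonempty := ⟨max (-w 0) 0, mem_image_of_mem _ (by constructor <;> simp [ht])⟩
  have hbdd : BddAbove S :=
    ((isCompact_Icc.image (by continuity)).bddAbove)
  set M : ℝ := sSup S with hM
  have hub : ∀ u ∈ Icc (0:ℝ) t, max (-w u) 0 ≤ M := fun u hu =>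
    le_csSup hbdd (mem_image_of_mem _ hu)
  have hM0 : 0 ≤ M := le_trans (le_max_right _ _) (hub 0 ⟨le_refl _, ht⟩)
  -- key: -w u ≤ L u for u ≥ 0
  have hwl : ∀ u : ℝ, 0 ≤ u → -w u ≤ L u := by
    intro u hu
    have := hXpos u hu
    rw [hXL u hu] at this
    linarith
  have h1 : M ≤ L t := by
    apply csSup_le hne
    rintro y ⟨u, hu, rfl⟩
    have h0u : 0 ≤ L t := by
      have := hLmono (self_mem_Ici (a := (0:ℝ))) ht ht
      rw [hL0] at this; exact this
    refine max_le ?_ h0u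
    exact le_trans (hwl u hu.1) (hLmono hu.1 ht hu.2)
  have h2 : L t ≤ M := by
    by_contra hlt
    push_neg at hlt
    have ht0 : 0 < t := by
      rcases eq_or_lt_of_le ht with h | h
      · rw [← h, hL0] at hlt; linarith
      · exact h
    set A : Set ℝ := Icc 0 t ∩ L ⁻¹' Iic M with hA
    have hAcomp : IsCompact A := isCompact_Icc.inter_right (isClosed_Iic.preimage hLcont)
    have hAne : A.Nonempty := ⟨0, ⟨le_refl _, ht⟩, by simp [hL0, hM0]⟩
    set s : ℝ := sSup A with hs
    have hsA : s ∈ A := hAcomp.sSup_mem hAne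
    have hs0 : 0 ≤ s := hsA.1.1
    have hsM : L s ≤ M := hsA.2
    have hst : s < t := lt_of_le_of_ne hsA.1.2 (fun h => absurd hsM (by rw [h]; exact not_le.mpr hlt))
    -- for u in (s, t], L u > M
    have hgt : ∀ u, s < u → u ≤ t → M < L u := by
      intro u hu hut
      by_contra h
      push_neg at h
      have : u ∈ A := ⟨⟨le_trans hs0 hu.le, hut⟩, h⟩
      exact absurd (le_csSup hAcomp.bddAbove this) (not_le.mpr hu)
    -- for u in (s, t), L u = L t
    have hconst : ∀ u, s < u → u < t → L u = L t := by
      intro u hsu hut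
      apply hflat u t (le_trans hs0 hsu.le) hut
      intro v hv
      have hv0 : 0 ≤ v := le_trans (le_trans hs0 hsu.le) hv.1
      rw [hXL v hv0]
      have hMv : -w v ≤ M := le_trans (le_max_left _ _) (hub v ⟨hv0, hv.2⟩)
      have := hgt v (lt_of_lt_of_le hsu hv.1) hv.2
      linarith
    -- by continuity, L s = L t
    have hLst : L s = L t := by
      have h1' : Filter.Tendsto L (nhdsWithin s (Ioi s)) (nhds (L s)) :=
        (hLcont.tendsto s).mono_left nhdsWithin_le_nhds
      have h2' : Filter.Tendsto L (nhdsWithin s (Ioi s)) (nhds (L t)) := by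
        apply Filter.Tendsto.congr' _ tendsto_const_nhds
        filter_upwards [Ioo_mem_nhdsGT_of_mem ⟨le_refl s, hst⟩] with u hu
        exact (hconst u hu.1 hu.2).symm
      exact tendsto_nhds_unique h1' h2'
    rw [hLst] at hsM
    exact absurd hsM (not_le.mpr hlt)
  linarith
end

section
/- (Summed Gronwall iteration) Let g_n : [0,T] → [0,∞) be continuous functions, and suppose there are constants C* ≥ 0 and 0 ≤ β < 1 such that for all n ≥ 1 and t ∈ [0,T]: g_{n+1}(t) ≤ C* ∫₀ᵗ g_n(s) ds + β g_n(t). If g_1 is bounded on [0,T], then Σ_{n=1}^∞ g_n(t) ≤ (sup_{[0,T]} g_1)/(1−β) · exp(C* T/(1−β)) < ∞ for all t ∈ [0,T]; in particular g_n(t) → 0. -/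
/-!
Write `S_M = ∑_{n<M} g_{n+1}`. Summing the recursion shifts the index by one, so, as the `g_n`
are nonnegative, `S_M ≤ g_1 + C* ∫₀ᵗ S_M + β S_M`. Since `β < 1` the last term is absorbed:
`S_M ≤ sup g_1 / (1 - β) + C* / (1 - β) ∫₀ᵗ S_M`, and Grönwall's inequality bounds `S_M`
uniformly in `M`. So the series of nonnegative terms converges, and its terms tend to `0`.
-/

open Set Real intervalIntegral

theorem add_mul_gronwallBound_zero (δ K x : ℝ) :
    δ + K * gronwallBound 0 K δ x = δ * exp (K * x) := by
  rcases eq_or_ne K 0 with rfl | hK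
  · simp [gronwallBound_K0]
  · rw [gronwallBound_of_K_ne_0 hK]
    field_simp
    ring

theorem hasDerivWithinAt_integral_Ici_of_continuousOn {S : ℝ → ℝ} {a b x : ℝ}
    (hS : ContinuousOn S (Icc a b)) (hx : x ∈ Ico a b) :
    HasDerivWithinAt (fun u => ∫ s in a..u, S s) (S x) (Ici x) x := by
  have hmem : Icc a b ∈ nhdsWithin x (Ioi x) := Icc_mem_nhdsGT_of_mem hx
  exact integral_hasDerivWithinAt_right
    ((hS.mono (Icc_subset_Icc_right hx.2.le)).intervalIntegrable_of_Icc hx.1)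
    ((hS.stronglyMeasurableAtFilter_nhdsWithin measurableSet_Icc x).filter_mono
      (nhdsWithin_le_of_mem hmem))
    ((hS.continuousWithinAt (Ico_subset_Icc_self hx)).mono_of_mem_nhdsWithin hmem)

theorem le_mul_exp_of_le_add_mul_integral {S : ℝ → ℝ} {a b δ K : ℝ} (hK : 0 ≤ K)
    (hS : ContinuousOn S (Icc a b))
    (h : ∀ u ∈ Icc a b, S u ≤ δ + K * ∫ s in a..u, S s) :
    ∀ t ∈ Icc a b, S t ≤ δ * exp (K * (t - a)) := by
  intro t ht
  have hab : a ≤ b := ht.1.trans ht.2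
  have hF : ContinuousOn (fun u => ∫ s in a..u, S s) (Icc a b) := by
    simpa only [uIcc_of_le hab] using
      continuousOn_primitive_interval' (hS.intervalIntegrable_of_Icc hab) left_mem_uIcc
  have hFt : ∫ s in a..t, S s ≤ gronwallBound 0 K δ (t - a) :=
    le_gronwallBound_of_liminf_deriv_right_le hF
      (fun x hx _ => (hasDerivWithinAt_integral_Ici_of_continuousOn hS hx).liminf_right_slope_le)
      (by simp) (fun x hx => by linarith [h x (Ico_subset_Icc_self hx)]) t ht
  calc S t ≤ δ + K * ∫ s in a..t, S s := h t ht
    _ ≤ δ + K * gronwallBound 0 K δ (t - a) := by gcongr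
    _ = δ * exp (K * (t - a)) := add_mul_gronwallBound_zero δ K (t - a)

theorem one_sub_mul_sum_range_le_of_iterate_le {f : ℕ → ℝ → ℝ} {a b C β : ℝ}
    (hC : 0 ≤ C) (hβ : 0 ≤ β)
    (hcont : ∀ n, ContinuousOn (f n) (Icc a b)) (hnonneg : ∀ n, ∀ t ∈ Icc a b, 0 ≤ f n t)
    (hrec : ∀ n, ∀ t ∈ Icc a b, f (n + 1) t ≤ C * (∫ s in a..t, f n s) + β * f n t)
    (M : ℕ) {t : ℝ} (ht : t ∈ Icc a b) :
    (1 - β) * ∑ n ∈ Finset.range M, f n t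
      ≤ f 0 t + C * ∫ s in a..t, ∑ n ∈ Finset.range M, f n s := by
  have hint : ∀ n, IntervalIntegrable (f n) MeasureTheory.volume a t := fun n =>
    ((hcont n).mono (Icc_subset_Icc_right ht.2)).intervalIntegrable_of_Icc ht.1
  cases M with
  | zero => simpa using hnonneg 0 t ht
  | succ m =>
    set S : ℕ → ℝ → ℝ := fun M u => ∑ n ∈ Finset.range M, f n u
    have hS_integral : ∀ M, ∫ s in a..t, S M s = ∑ n ∈ Finset.range M, ∫ s in a..t, f n s :=
      fun M => integral_finsetSum fun n _ => hint n
    have hS_mono : ∀ u ∈ Icc a b, S m u ≤ S (m + 1) u := fun u hu => by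
      simpa [S, Finset.sum_range_succ] using hnonneg m u hu
    have hshift : S (m + 1) t ≤ f 0 t + (C * ∫ s in a..t, S m s) + β * S m t := by
      calc S (m + 1) t = ∑ n ∈ Finset.range m, f (n + 1) t + f 0 t := Finset.sum_range_succ' _ _
        _ ≤ ∑ n ∈ Finset.range m, (C * (∫ s in a..t, f n s) + β * f n t) + f 0 t := by
          gcongr with n; exact hrec n t ht
        _ = f 0 t + (C * ∫ s in a..t, S m s) + β * S m t := by
          rw [hS_integral, Finset.sum_add_distrib, ← Finset.mul_sum, ← Finset.mul_sum]; ring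
    have hS_integrable : ∀ M, IntervalIntegrable (S M) MeasureTheory.volume a t := fun M => by
      simpa only [Finset.sum_fn] using IntervalIntegrable.sum (Finset.range M) fun n _ => hint n
    have hint_mono : ∫ s in a..t, S m s ≤ ∫ s in a..t, S (m + 1) s :=
      integral_mono_on ht.1 (hS_integrable m) (hS_integrable (m + 1))
        fun u hu => hS_mono u ⟨hu.1, hu.2.trans ht.2⟩
    change (1 - β) * S (m + 1) t ≤ f 0 t + C * ∫ s in a..t, S (m + 1) s
    linarith [mul_le_mul_of_nonneg_left hint_mono hC, mul_le_mul_of_nonneg_left (hS_mono t ht) hβ]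

theorem sum_range_le_of_iterate_le {f : ℕ → ℝ → ℝ} {a b C β A : ℝ}
    (hC : 0 ≤ C) (hβ0 : 0 ≤ β) (hβ1 : β < 1)
    (hcont : ∀ n, ContinuousOn (f n) (Icc a b)) (hnonneg : ∀ n, ∀ t ∈ Icc a b, 0 ≤ f n t)
    (hrec : ∀ n, ∀ t ∈ Icc a b, f (n + 1) t ≤ C * (∫ s in a..t, f n s) + β * f n t)
    (hA : ∀ t ∈ Icc a b, f 0 t ≤ A) (M : ℕ) :
    ∀ t ∈ Icc a b, ∑ n ∈ Finset.range M, f n t ≤ A / (1 - β) * exp (C / (1 - β) * (t - a)) := by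
  have h1β : 0 < 1 - β := by linarith
  refine le_mul_exp_of_le_add_mul_integral (div_nonneg hC h1β.le)
    (continuousOn_finsetSum _ fun n _ => hcont n) fun u hu => ?_
  have := one_sub_mul_sum_range_le_of_iterate_le hC hβ0 hcont hnonneg hrec M hu
  calc ∑ n ∈ Finset.range M, f n u
      ≤ (A + C * ∫ s in a..u, ∑ n ∈ Finset.range M, f n s) / (1 - β) := by
        rw [le_div_iff₀ h1β]
        linarith [hA u hu]
    _ = A / (1 - β) + C / (1 - β) * ∫ s in a..u, ∑ n ∈ Finset.range M, f n s := by ring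

theorem summed_gronwall_iteration_general (T Cstar β : ℝ)
    (hC : 0 ≤ Cstar) (hβ0 : 0 ≤ β) (hβ1 : β < 1)
    (g : ℕ → ℝ → ℝ)
    (hgcont : ∀ n, ContinuousOn (g n) (Icc 0 T))
    (hgpos : ∀ n, ∀ t ∈ Icc 0 T, 0 ≤ g n t)
    (hrec : ∀ n : ℕ, 1 ≤ n → ∀ t ∈ Icc 0 T,
      g (n + 1) t ≤ Cstar * (∫ s in (0:ℝ)..t, g n s) + β * g n t) :
    ∀ t ∈ Icc 0 T,
      (∑' n : ℕ, g (n + 1) t)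
          ≤ (sSup (g 1 '' Icc 0 T)) / (1 - β) * Real.exp (Cstar * T / (1 - β)) ∧
      Filter.Tendsto (fun n => g n t) Filter.atTop (nhds 0) := by
  intro t ht
  set A := sSup (g 1 '' Icc 0 T)
  have hA : ∀ s ∈ Icc 0 T, g 1 s ≤ A := fun s hs =>
    le_csSup (isCompact_Icc.bddAbove_image (hgcont 1)) (mem_image_of_mem _ hs)
  have h1β : 0 < 1 - β := by linarith
  have hA0 : 0 ≤ A / (1 - β) := div_nonneg ((hgpos 1 t ht).trans (hA t ht)) h1β.le
  have hnonneg : ∀ n, 0 ≤ g (n + 1) t := fun n => hgpos (n + 1) t ht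
  have hbound : ∀ M, ∑ n ∈ Finset.range M, g (n + 1) t
      ≤ A / (1 - β) * exp (Cstar * T / (1 - β)) := fun M =>
    (sum_range_le_of_iterate_le hC hβ0 hβ1 (fun n => hgcont (n + 1)) (fun n => hgpos (n + 1))
      (fun n => hrec (n + 1) (Nat.le_add_left 1 n)) hA M t ht).trans <| by
        rw [sub_zero, div_mul_eq_mul_div Cstar]
        gcongr
        exact ht.2
  exact ⟨Real.tsum_le_of_sum_range_le hnonneg hbound,
    (Filter.tendsto_add_atTop_iff_nat 1).mp
      (summable_of_sum_range_le hnonneg hbound).tendsto_atTop_zero⟩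

/-- (Summed Gronwall iteration) Let g_n : [0,T] → [0,∞) be continuous, with
g_{n+1}(t) ≤ C* ∫₀ᵗ g_n(s) ds + β g_n(t) for all n ≥ 1 and t ∈ [0,T], where C* ≥ 0 and
0 ≤ β < 1. If g_1 is bounded on [0,T], then
Σ_{n=1}^∞ g_n(t) ≤ (sup g_1)/(1−β)·exp(C* T/(1−β)) for all t ∈ [0,T];
in particular g_n(t) → 0. -/
theorem summed_gronwall_iteration (T Cstar β : ℝ) (hT : 0 < T)
    (hC : 0 ≤ Cstar) (hβ0 : 0 ≤ β) (hβ1 : β < 1)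
    (g : ℕ → ℝ → ℝ)
    (hgcont : ∀ n, ContinuousOn (g n) (Icc 0 T))
    (hgpos : ∀ n, ∀ t ∈ Icc 0 T, 0 ≤ g n t)
    (hrec : ∀ n : ℕ, 1 ≤ n → ∀ t ∈ Icc 0 T,
      g (n + 1) t ≤ Cstar * (∫ s in (0:ℝ)..t, g n s) + β * g n t) :
    ∀ t ∈ Icc 0 T,
      (∑' n : ℕ, g (n + 1) t)
          ≤ (sSup (g 1 '' Icc 0 T)) / (1 - β) * Real.exp (Cstar * T / (1 - β)) ∧
      Filter.Tendsto (fun n => g n t) Filter.atTop (nhds 0) :=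
  summed_gronwall_iteration_general T Cstar β hC hβ0 hβ1 g hgcont hgpos hrec
end

section
/- (Iterated affine recursion bound) Let ψ_n : [0,T] → [0,∞) be measurable bounded functions satisfying ψ_{n+1}(t) ≤ c₁ + c₂ ψ_n(t) + c₃ ∫₀ᵗ ψ_n(u) du for all n and t ∈ [0,T], where c₁, c₃ ≥ 0 and 0 ≤ c₂ < 1. If ψ_0 is bounded, then sup_n sup_{t∈[0,T]} ψ_n(t) < ∞. -/
open Set Real MeasureTheory

/-!
Weight time by `exp (-L t)`. Since `∫₀ᵗ exp (L u) du ≤ exp (L t) / L`, the bound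
`ψ n t ≤ C exp (L t)` is carried from `n` to `n + 1` as soon as
`c₁ + (c₂ + c₃ / L) C ≤ C`. Taking `L` so large that `c₂ + c₃ / L < 1`, every large `C`
satisfies this, so one `C` works for all `n`, and `C exp (L T)` bounds the whole family.
-/

theorem integral_const_mul_exp_mul (C : ℝ) {L : ℝ} (hL : L ≠ 0) (t : ℝ) :
    ∫ u in (0:ℝ)..t, C * exp (L * u) = C / L * (exp (L * t) - 1) := by
  simp only [intervalIntegral.integral_const_mul, intervalIntegral.integral_comp_mul_left _ hL,
    mul_zero, integral_exp, exp_zero, smul_eq_mul]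
  ring

theorem intervalIntegral_mono_of_nonneg {f g : ℝ → ℝ} {a b : ℝ} (hab : a ≤ b)
    (hf : ∀ u ∈ Ioc a b, 0 ≤ f u) (hfg : ∀ u ∈ Ioc a b, f u ≤ g u)
    (hg : IntervalIntegrable g volume a b) :
    ∫ u in a..b, f u ≤ ∫ u in a..b, g u := by
  rw [intervalIntegral.integral_of_le hab, intervalIntegral.integral_of_le hab]
  exact integral_mono_of_nonneg (ae_restrict_of_forall_mem measurableSet_Ioc hf) hg.1
    (ae_restrict_of_forall_mem measurableSet_Ioc hfg)

theorem intervalIntegral_le_div_mul_exp {f : ℝ → ℝ} {C L t : ℝ} (hL : 0 < L) (hC : 0 ≤ C)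
    (ht : 0 ≤ t) (hf : ∀ u ∈ Ioc 0 t, 0 ≤ f u) (hfC : ∀ u ∈ Ioc 0 t, f u ≤ C * exp (L * u)) :
    ∫ u in (0:ℝ)..t, f u ≤ C / L * exp (L * t) :=
  calc ∫ u in (0:ℝ)..t, f u ≤ ∫ u in (0:ℝ)..t, C * exp (L * u) :=
        intervalIntegral_mono_of_nonneg ht hf hfC
          ((by fun_prop : Continuous fun u => C * exp (L * u)).intervalIntegrable 0 t)
    _ = C / L * (exp (L * t) - 1) := integral_const_mul_exp_mul C hL.ne' t
    _ ≤ C / L * exp (L * t) := by gcongr; linarith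

theorem exists_pos_add_div_lt_one {c₂ c₃ : ℝ} (hc₂ : c₂ < 1) (hc₃ : 0 ≤ c₃) :
    ∃ L > 0, c₂ + c₃ / L < 1 := by
  have h1c₂ : 0 < 1 - c₂ := by linarith
  refine ⟨(c₃ + 1) / (1 - c₂), by positivity, ?_⟩
  have : c₃ * (1 - c₂) / (c₃ + 1) < 1 - c₂ := by
    rw [div_lt_iff₀ (by positivity)]
    nlinarith
  rw [div_div_eq_mul_div]
  linarith

section AffineIntegralRecursion

variable {T c₁ c₂ c₃ L C : ℝ} {ψ : ℕ → ℝ → ℝ}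

theorem affine_integral_recursion_step (hc₁ : 0 ≤ c₁) (hc₂ : 0 ≤ c₂) (hc₃ : 0 ≤ c₃)
    (hL : 0 < L) (hC : 0 ≤ C) (hfix : c₁ + (c₂ + c₃ / L) * C ≤ C)
    {φ : ℝ → ℝ} {t : ℝ} (ht : 0 ≤ t) (hφ : ∀ u ∈ Icc 0 t, 0 ≤ φ u)
    (hφC : ∀ u ∈ Icc 0 t, φ u ≤ C * exp (L * u)) :
    c₁ + c₂ * φ t + c₃ * ∫ u in (0:ℝ)..t, φ u ≤ C * exp (L * t) := by
  have hE : 1 ≤ exp (L * t) := one_le_exp (by positivity)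
  have hint : ∫ u in (0:ℝ)..t, φ u ≤ C / L * exp (L * t) :=
    intervalIntegral_le_div_mul_exp hL hC ht (fun u hu => hφ u (Ioc_subset_Icc_self hu))
      (fun u hu => hφC u (Ioc_subset_Icc_self hu))
  calc c₁ + c₂ * φ t + c₃ * ∫ u in (0:ℝ)..t, φ u
      ≤ c₁ + c₂ * (C * exp (L * t)) + c₃ * (C / L * exp (L * t)) := by
        gcongr
        exact hφC t ⟨ht, le_rfl⟩
    _ = c₁ + (c₂ + c₃ / L) * C * exp (L * t) := by ring
    _ ≤ (c₁ + (c₂ + c₃ / L) * C) * exp (L * t) := by nlinarith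
    _ ≤ C * exp (L * t) := by gcongr

theorem le_mul_exp_of_affine_integral_recursion (hc₁ : 0 ≤ c₁) (hc₂ : 0 ≤ c₂)
    (hc₃ : 0 ≤ c₃) (hL : 0 < L) (hC : 0 ≤ C) (hfix : c₁ + (c₂ + c₃ / L) * C ≤ C)
    (hpos : ∀ n, ∀ t ∈ Icc 0 T, 0 ≤ ψ n t)
    (h0 : ∀ t ∈ Icc 0 T, ψ 0 t ≤ C * exp (L * t))
    (hrec : ∀ n : ℕ, ∀ t ∈ Icc 0 T,
      ψ (n + 1) t ≤ c₁ + c₂ * ψ n t + c₃ * ∫ u in (0:ℝ)..t, ψ n u) :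
    ∀ n, ∀ t ∈ Icc 0 T, ψ n t ≤ C * exp (L * t) := by
  intro n
  induction n with
  | zero => exact h0
  | succ n ih =>
    intro t ht
    have hsub : Icc 0 t ⊆ Icc 0 T := Icc_subset_Icc_right ht.2
    exact (hrec n t ht).trans <| affine_integral_recursion_step hc₁ hc₂ hc₃ hL hC hfix ht.1
      (fun u hu => hpos n u (hsub hu)) (fun u hu => ih u (hsub hu))

end AffineIntegralRecursion

theorem iterated_affine_recursion_bound_general (T c₁ c₂ c₃ : ℝ)
    (hc₁ : 0 ≤ c₁) (hc₂0 : 0 ≤ c₂) (hc₂1 : c₂ < 1) (hc₃ : 0 ≤ c₃)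
    (ψ : ℕ → ℝ → ℝ)
    (hpos : ∀ n, ∀ t ∈ Icc 0 T, 0 ≤ ψ n t)
    (hbdd : ∀ n, ∃ B : ℝ, ∀ t ∈ Icc 0 T, ψ n t ≤ B)
    (hrec : ∀ n : ℕ, ∀ t ∈ Icc 0 T,
      ψ (n + 1) t ≤ c₁ + c₂ * ψ n t + c₃ * ∫ u in (0:ℝ)..t, ψ n u) :
    ∃ M : ℝ, ∀ n : ℕ, ∀ t ∈ Icc 0 T, ψ n t ≤ M := by
  obtain ⟨L, hL, hq⟩ := exists_pos_add_div_lt_one hc₂1 hc₃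
  obtain ⟨B₀, hB₀⟩ := hbdd 0
  set C := max B₀ (c₁ / (1 - (c₂ + c₃ / L)))
  have hC : 0 ≤ C := (div_nonneg hc₁ (by linarith)).trans (le_max_right _ _)
  have hfix : c₁ + (c₂ + c₃ / L) * C ≤ C := by
    have := (div_le_iff₀ (by linarith)).mp (le_max_right B₀ (c₁ / (1 - (c₂ + c₃ / L))))
    linarith
  have h0 (t : ℝ) (ht : t ∈ Icc 0 T) : ψ 0 t ≤ C * exp (L * t) :=
    calc ψ 0 t ≤ C := (hB₀ t ht).trans (le_max_left _ _)
      _ ≤ C * exp (L * t) := le_mul_of_one_le_right hC (one_le_exp (by nlinarith [ht.1]))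
  refine ⟨C * exp (L * T), fun n t ht => ?_⟩
  calc ψ n t ≤ C * exp (L * t) :=
        le_mul_exp_of_affine_integral_recursion hc₁ hc₂0 hc₃ hL hC hfix hpos h0 hrec n t ht
    _ ≤ C * exp (L * T) := by gcongr; exact ht.2

/-- (Iterated affine recursion bound) Let ψ_n : [0,T] → [0,∞) be measurable bounded
functions with ψ_{n+1}(t) ≤ c₁ + c₂ ψ_n(t) + c₃ ∫₀ᵗ ψ_n(u) du on [0,T], where
c₁, c₃ ≥ 0 and 0 ≤ c₂ < 1. If ψ_0 is bounded then sup_n sup_{[0,T]} ψ_n < ∞. -/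
theorem iterated_affine_recursion_bound (T c₁ c₂ c₃ : ℝ) (hT : 0 < T)
    (hc₁ : 0 ≤ c₁) (hc₂0 : 0 ≤ c₂) (hc₂1 : c₂ < 1) (hc₃ : 0 ≤ c₃)
    (ψ : ℕ → ℝ → ℝ)
    (hmeas : ∀ n, Measurable (ψ n))
    (hpos : ∀ n, ∀ t ∈ Icc 0 T, 0 ≤ ψ n t)
    (hbdd : ∀ n, ∃ B : ℝ, ∀ t ∈ Icc 0 T, ψ n t ≤ B)
    (hrec : ∀ n : ℕ, ∀ t ∈ Icc 0 T,
      ψ (n + 1) t ≤ c₁ + c₂ * ψ n t + c₃ * ∫ u in (0:ℝ)..t, ψ n u) :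
    ∃ M : ℝ, ∀ n : ℕ, ∀ t ∈ Icc 0 T, ψ n t ≤ M :=
  iterated_affine_recursion_bound_general T c₁ c₂ c₃ hc₁ hc₂0 hc₂1 hc₃ ψ hpos hbdd hrec
end
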